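/- Let s be a complex number with Re(s) > 1. Then ∫_{{x integral}} |x|_f^{s} dμ(x) = ζ(s), the Riemann zeta function. -/

import Mathlib

open MeasureTheory

noncomputable section

instance (p : Nat.Primes) : Fact (p : ℕ).Prime := ⟨p.2⟩

/-- The group in which finite ideles live: tuples of nonzero `p`-adic numbers. -/
abbrev IdeleComponents : Type := ∀ p : Nat.Primes, ℚ_[(p : ℕ)]ˣ

/-- The group of finite ideles of `ℚ`: tuples of nonzero `p`-adic numbers which are
`p`-adic units for all but finitely many `p` (the unit group of the restricted
product of the `ℚ_p` with respect to the `ℤ_p`). -/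
def FiniteIdeles : Subgroup IdeleComponents where
  carrier := {x | {p : Nat.Primes | ‖((x p : ℚ_[(p : ℕ)]))‖ ≠ 1}.Finite}
  one_mem' := by
    simp
  mul_mem' := by
    intro x y hx hy
    refine (hx.union hy).subset ?_
    intro p hp
    by_contra h
    simp only [Set.mem_union, Set.mem_setOf_eq, not_or, not_not] at h
    apply hp
    simp [Pi.mul_apply, Units.val_mul, norm_mul, h.1, h.2]
  inv_mem' := by
    intro x hx
    refine hx.subset ?_
    intro p hp
    simp only [Set.mem_setOf_eq, Pi.inv_apply] at hp ⊢
    rw [Units.val_inv_eq_inv_val, norm_inv] at hp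
    intro h
    rw [h] at hp
    simp at hp

/-- The idele norm of a finite idele: the product `∏_p |x_p|_p` over all primes
(all but finitely many factors equal `1`). -/
def fnorm (x : FiniteIdeles) : ℝ :=
  ∏ᶠ p : Nat.Primes, ‖((x : IdeleComponents) p : ℚ_[(p : ℕ)])‖

/-- A finite idele is integral if all of its components are `p`-adic integers. -/
def IsIntegralIdele (x : FiniteIdeles) : Prop :=
  ∀ p : Nat.Primes, ‖((x : IdeleComponents) p : ℚ_[(p : ℕ)])‖ ≤ 1

/-- The subset `Ẑ^×` of the finite ideles: all components are `p`-adic units. -/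
def zHatUnits : Set FiniteIdeles :=
  {x | ∀ p : Nat.Primes, ‖((x : IdeleComponents) p : ℚ_[(p : ℕ)])‖ = 1}

/-! An integral idele `x` has the same `p`-adic norms as the positive integer
`n = ∏ p ^ v_p(x_p)`, so the integral ideles are the disjoint union of the cosets `n • Ẑ^×`.
On `n • Ẑ^×` the product formula gives `|x|_f = 1/n`, and translation invariance gives
`μ(n • Ẑ^×) = μ(Ẑ^×) = 1`; hence the integral is `∑_{n ≥ 1} n^{-s} = ζ(s)`. -/

open Pointwise

theorem setIntegral_iUnion_of_eqOn_const {X E ι : Type*} [MeasurableSpace X]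
    [NormedAddCommGroup E] [NormedSpace ℝ E] [CompleteSpace E] [Countable ι] {μ : Measure X}
    {s : ι → Set X} {f : X → E} {c : ι → E} (hs : ∀ i, MeasurableSet (s i))
    (hd : Pairwise (Function.onFun Disjoint s))
    (hμ : ∀ i, μ (s i) ≠ ⊤) (hf : ∀ i, Set.EqOn f (fun _ => c i) (s i))
    (hc : Summable fun i => μ.real (s i) * ‖c i‖) :
    ∫ x in ⋃ i, s i, f x ∂μ = ∑' i, μ.real (s i) • c i := by
  have hint : ∀ i, IntegrableOn f (s i) μ := fun i =>
    (integrableOn_congr_fun (hf i) (hs i)).mpr (integrableOn_const (hμ i))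
  have hnorm : ∀ i, ∫ x in s i, ‖f x‖ ∂μ = μ.real (s i) * ‖c i‖ := fun i => by
    rw [setIntegral_congr_fun (hs i) fun x hx => congrArg norm (hf i hx), setIntegral_const,
      smul_eq_mul]
  rw [integral_iUnion hs hd
    (integrableOn_iUnion_of_summable_integral_norm hint (by simpa only [hnorm] using hc))]
  exact tsum_congr fun i => by rw [setIntegral_congr_fun (hs i) (hf i), setIntegral_const]

namespace Padic

variable {p : ℕ} [Fact p.Prime]

theorem norm_natCast_eq_inv_pow_factorization {n : ℕ} (hn : n ≠ 0) :
    ‖(n : ℚ_[p])‖ = ((p : ℝ) ^ n.factorization p)⁻¹ := by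
  rw [norm_eq_zpow_neg_valuation (Nat.cast_ne_zero.mpr hn), valuation_natCast,
    ← Nat.factorization_def n Fact.out, zpow_neg, zpow_natCast]

theorem norm_eq_norm_p_pow_of_norm_le_one {x : ℚ_[p]} (hx0 : x ≠ 0) (hx : ‖x‖ ≤ 1) :
    ‖x‖ = ‖(p : ℚ_[p])‖ ^ x.valuation.toNat := by
  have hv : (x.valuation.toNat : ℤ) = x.valuation :=
    Int.toNat_of_nonneg ((norm_le_one_iff_val_nonneg x).mp hx)
  rw [norm_eq_zpow_neg_valuation hx0, norm_p, inv_pow, ← zpow_natCast, hv, zpow_neg]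

theorem norm_natCast_eq_one_of_prime_ne {q : ℕ} (hq : q.Prime) (hqp : q ≠ p) :
    ‖(q : ℚ_[p])‖ = 1 :=
  norm_natCast_eq_one_iff.mpr ((Nat.coprime_primes Fact.out hq).mpr hqp.symm)

end Padic

theorem mulSupport_norm_natCast_padic_subset {n : ℕ} (hn : n ≠ 0) :
    Function.mulSupport (fun p : Nat.Primes => ‖(n : ℚ_[p])‖) ⊆
      (↑) ⁻¹' (n.primeFactors : Set ℕ) := by
  intro p hp
  rw [Function.mem_mulSupport, Ne, Padic.norm_natCast_eq_one_iff,
    Nat.Prime.coprime_iff_not_dvd p.2, not_not] at hp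
  exact Nat.mem_primeFactors.mpr ⟨p.2, hp, hn⟩

theorem finprod_norm_natCast_padic {n : ℕ} (hn : n ≠ 0) :
    ∏ᶠ p : Nat.Primes, ‖(n : ℚ_[p])‖ = (n : ℝ)⁻¹ := calc
  _ = ∏ᶠ (q : ℕ) (_ : q.Prime), ((q : ℝ) ^ n.factorization q)⁻¹ :=
    (finprod_congr fun p : Nat.Primes => Padic.norm_natCast_eq_inv_pow_factorization hn).trans
      (finprod_subtype_eq_finprod_cond (f := fun q : ℕ => ((q : ℝ) ^ n.factorization q)⁻¹) _)
  _ = (∏ q ∈ n.primeFactors, (q : ℝ) ^ n.factorization q)⁻¹ := by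
    rw [finprod_cond_eq_prod_of_cond_iff _ fun {q} hq => ?_, Finset.prod_inv_distrib]
    have : n.factorization q ≠ 0 := fun h => hq (by simp [h])
    exact ⟨fun hq' => Nat.mem_primeFactors.mpr ⟨hq', Nat.dvd_of_factorization_pos this, hn⟩,
      Nat.prime_of_mem_primeFactors⟩
  _ = (n : ℝ)⁻¹ := by
    exact_mod_cast congrArg (fun m : ℕ => (m : ℝ)⁻¹)
      (Nat.prod_primeFactors_pow_factorization hn).symm

theorem Complex.ofReal_inv_natCast_cpow (n : ℕ) (s : ℂ) :
    (((n : ℝ)⁻¹ : ℝ) : ℂ) ^ s = 1 / (n : ℂ) ^ s := by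
  rw [ofReal_inv, ofReal_natCast, inv_cpow _ _ (by rw [natCast_arg]; exact Real.pi_ne_zero.symm),
    one_div]

namespace FiniteIdeles

def ofPNat (n : ℕ+) : FiniteIdeles :=
  ⟨fun p => Units.mk0 ((n : ℕ) : ℚ_[p]) (by simp),
    (n.1.primeFactors.finite_toSet.preimage Nat.Primes.coe_nat_injective.injOn).subset
      (mulSupport_norm_natCast_padic_subset n.ne_zero)⟩

theorem mem_ofPNat_smul_zHatUnits_iff {n : ℕ+} {x : FiniteIdeles} :
    x ∈ ofPNat n • zHatUnits ↔ ∀ p : Nat.Primes, ‖(x.1 p : ℚ_[p])‖ = ‖((n : ℕ) : ℚ_[p])‖ := by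
  rw [Set.mem_smul_set_iff_inv_smul_mem]
  refine forall_congr' fun p => ?_
  have hn : ‖((n : ℕ) : ℚ_[p])‖ ≠ 0 := by simp
  change ‖((n : ℕ) : ℚ_[p])⁻¹ * (x.1 p : ℚ_[p])‖ = 1 ↔ _
  rw [norm_mul, norm_inv, inv_mul_eq_one₀ hn, eq_comm]

theorem fnorm_of_mem_ofPNat_smul_zHatUnits {n : ℕ+} {x : FiniteIdeles}
    (hx : x ∈ ofPNat n • zHatUnits) : fnorm x = ((n : ℕ) : ℝ)⁻¹ := by
  rw [fnorm, finprod_congr (mem_ofPNat_smul_zHatUnits_iff.mp hx),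
    finprod_norm_natCast_padic n.ne_zero]

theorem pairwise_disjoint_ofPNat_smul_zHatUnits :
    Pairwise (Function.onFun Disjoint fun n : ℕ+ => ofPNat n • zHatUnits) := by
  refine fun m n hmn => Set.disjoint_left.mpr fun x hm hn => hmn ?_
  have hnorm := (fnorm_of_mem_ofPNat_smul_zHatUnits hm).symm.trans
    (fnorm_of_mem_ofPNat_smul_zHatUnits hn)
  exact PNat.coe_injective (by exact_mod_cast inv_injective hnorm)

theorem exists_pnat_norm_eq_of_isIntegralIdele {x : FiniteIdeles} (hx : IsIntegralIdele x) :
    ∃ n : ℕ+, ∀ p : Nat.Primes, ‖(x.1 p : ℚ_[p])‖ = ‖((n : ℕ) : ℚ_[p])‖ := by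
  set k : Nat.Primes → ℕ := fun p => (x.1 p : ℚ_[p]).valuation.toNat
  have hxk : ∀ p : Nat.Primes, ‖(x.1 p : ℚ_[p])‖ = ‖((p : ℕ) : ℚ_[p])‖ ^ k p := fun p =>
    Padic.norm_eq_norm_p_pow_of_norm_le_one (Units.ne_zero _) (hx p)
  have hfin : {p : Nat.Primes | ‖(x.1 p : ℚ_[p])‖ ≠ 1}.Finite := x.2
  refine ⟨⟨∏ p ∈ hfin.toFinset, (p : ℕ) ^ k p,
    Finset.prod_pos fun p _ => pow_pos p.2.pos _⟩, fun q => ?_⟩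
  rw [PNat.mk_coe, Nat.cast_prod, norm_prod, hxk q]
  refine ((Finset.prod_eq_single q (fun p _ hpq => ?_) fun hq => ?_).trans (by simp)).symm
  · rw [Nat.cast_pow, norm_pow, Padic.norm_natCast_eq_one_of_prime_ne p.2
      ((Nat.Primes.coe_nat_inj _ _).not.mpr hpq), one_pow]
  · rw [Set.Finite.mem_toFinset, Set.mem_ofPred_eq, not_not] at hq
    rw [Nat.cast_pow, norm_pow, ← hxk q, hq]

theorem setOf_isIntegralIdele_eq_iUnion :
    {x | IsIntegralIdele x} = ⋃ n : ℕ+, ofPNat n • zHatUnits := by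
  ext x
  simp only [Set.mem_ofPred_eq, Set.mem_iUnion, mem_ofPNat_smul_zHatUnits_iff]
  refine ⟨exists_pnat_norm_eq_of_isIntegralIdele, fun ⟨n, hn⟩ p => ?_⟩
  rw [hn p]
  exact_mod_cast Padic.norm_int_le_one ((n : ℕ) : ℤ)

end FiniteIdeles

open FiniteIdeles

theorem adelic_riemann_zeta_general [MeasurableSpace FiniteIdeles]
    (μ : Measure FiniteIdeles)
    (hinv : ∀ a : FiniteIdeles, MeasurePreserving (fun x => a * x) μ μ)
    (hZmeas : MeasurableSet zHatUnits)
    (hZ : μ zHatUnits = 1)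
    (s : ℂ) (hs : 1 < s.re) :
    ∫ x in {x : FiniteIdeles | IsIntegralIdele x}, (fnorm x : ℂ) ^ s ∂μ
      = riemannZeta s := by
  have hcoset : ∀ n : ℕ+,
      MeasurableSet (ofPNat n • zHatUnits) ∧ μ (ofPNat n • zHatUnits) = 1 := fun n => by
    rw [← Set.preimage_smul_inv]
    exact ⟨(hinv _).measurable hZmeas,
      ((hinv _).measure_preimage hZmeas.nullMeasurableSet).trans hZ⟩
  have hreal : ∀ n : ℕ+, μ.real (ofPNat n • zHatUnits) = 1 := fun n => by
    simp [Measure.real, (hcoset n).2]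
  have hsum : Summable fun n : ℕ+ => ‖1 / ((n : ℕ) : ℂ) ^ s‖ :=
    (summable_norm_iff.mpr (Complex.summable_one_div_nat_cpow.mpr hs)).comp_injective
      PNat.coe_injective
  rw [setOf_isIntegralIdele_eq_iUnion, setIntegral_iUnion_of_eqOn_const (fun n => (hcoset n).1)
    pairwise_disjoint_ofPNat_smul_zHatUnits (fun n => by simp [(hcoset n).2])
    (c := fun n : ℕ+ => 1 / ((n : ℕ) : ℂ) ^ s)
    (fun n x hx => by
      rw [fnorm_of_mem_ofPNat_smul_zHatUnits hx, Complex.ofReal_inv_natCast_cpow])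
    (by simpa only [hreal, one_mul] using hsum)]
  simp only [hreal, one_smul]
  rw [tsum_pnat_eq_tsum_succ (f := fun n => 1 / (n : ℂ) ^ s),
    zeta_eq_tsum_one_div_nat_add_one_cpow hs]
  simp only [Nat.cast_add, Nat.cast_one]

/-- Let `μ` be a translation-invariant measure on the finite ideles
`𝔸_f^×` of `ℚ` with `μ(Ẑ^×) = 1` (for which `Ẑ^×` is measurable and the idele norm
`|·|_f` is measurable, as holds for any Borel measure on the idele topology).  For
complex `s` with `Re s > 1`, the adelic integral `∫_{x integral} |x|_f^s dμ(x)`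
equals the Riemann zeta function `ζ(s)`. -/
theorem adelic_riemann_zeta [MeasurableSpace FiniteIdeles]
    (μ : Measure FiniteIdeles)
    (hinv : ∀ a : FiniteIdeles, MeasurePreserving (fun x => a * x) μ μ)
    (hnorm : Measurable fnorm) (hZmeas : MeasurableSet zHatUnits)
    (hZ : μ zHatUnits = 1)
    (s : ℂ) (hs : 1 < s.re) :
    ∫ x in {x : FiniteIdeles | IsIntegralIdele x}, (fnorm x : ℂ) ^ s ∂μ
      = riemannZeta s :=
  adelic_riemann_zeta_general μ hinv hZmeas hZ s hs
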